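/- Progress for the direct-style λ*ε-calculus: if ∅^{dom(Σ)} | Σ ⊢ t : T^q ε (t is well typed in an empty variable context with observation filter dom(Σ)), then either t is a value, or for every store σ with ∅^{dom(Σ)} | Σ ⊢ σ there exist a term t' and a store σ' such that σ | t →ᵥ σ' | t'. -/

import Mathlib

/-! Induction on the typing derivation; the empty context rules out variables. A value is in
canonical form for its type, and subsumption preserves this because subtyping keeps the outermost
type constructor; a well-formed store holds a value at every location typed by `Σ`, and a
fresh location always exists for allocation. -/

/-- Atoms: term variables and store locations. -/
inductive Atom : Type
  | var : ℕ → Atom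
  | loc : ℕ → Atom
deriving DecidableEq

/-- Qualifiers, effects and observations: finite sets of atoms. -/
abbrev Qual : Type := Finset Atom

/-- Types of the direct-style λ*ε-calculus. `fn x p T ε r U` is `(x : T^p) →^ε U^r`. -/
inductive Ty : Type
  | base : ℕ → Ty
  | fn : ℕ → Qual → Ty → Qual → Qual → Ty → Ty
  | ref : ℕ → Ty

/-- Entries of typing contexts / store typings. -/
abbrev Binding := ℕ × Ty × Qual
abbrev Ctx := List Binding
abbrev StoreTy := List Binding

/-- Lookup in an association list (most recent binding first). -/
def lookupL {α : Type} : List (ℕ × α) → ℕ → Option α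
  | [], _ => none
  | (y, e) :: Γ, x => if x = y then some e else lookupL Γ x

def ctxAtoms (Γ : Ctx) : Qual := (Γ.map (fun b => Atom.var b.1)).toFinset
def styAtoms (St : StoreTy) : Qual := (St.map (fun b => Atom.loc b.1)).toFinset

/-- Qualifier substitution `q[p/x]`. -/
def qsubst (q : Qual) (p : Qual) (x : ℕ) : Qual :=
  if Atom.var x ∈ q then (q.erase (Atom.var x)) ∪ p else q

/-- Term variables occurring in a qualifier. -/
def qVars (q : Qual) : Finset ℕ :=
  q.biUnion (fun a => match a with | Atom.var x => {x} | Atom.loc _ => ∅)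

/-- Free term variables of a type. -/
def Ty.fv : Ty → Finset ℕ
  | .base _ => ∅
  | .ref _ => ∅
  | .fn x p T ε r U => qVars p ∪ T.fv ∪ ((qVars ε ∪ qVars r ∪ U.fv).erase x)

/-- Qualifier substitution, extended homomorphically to types. -/
def Ty.qsubstT : Ty → Qual → ℕ → Ty
  | .base b, _, _ => .base b
  | .ref b, _, _ => .ref b
  | .fn y p T ε r U, q, x =>
      if y = x then .fn y (qsubst p q x) (T.qsubstT q x) ε r U
      else .fn y (qsubst p q x) (T.qsubstT q x) (qsubst ε q x) (qsubst r q x) (U.qsubstT q x)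

/-- One-step reachability between atoms, as determined by Γ and Σ. -/
def Reaches (Γ : Ctx) (St : StoreTy) (a b : Atom) : Prop :=
  match a with
  | .var x => ∃ e : Ty × Qual, lookupL Γ x = some e ∧ b ∈ e.2
  | .loc l => ∃ e : Ty × Qual, lookupL St l = some e ∧ b ∈ e.2

/-- `Sat Γ St q s` : `s` is the saturation (transitive reachability closure) `q*` of `q`. -/
def Sat (Γ : Ctx) (St : StoreTy) (q s : Qual) : Prop :=
  ∀ a, a ∈ s ↔ ∃ b ∈ q, Relation.ReflTransGen (Reaches Γ St) b a

/-- Qualifier subtyping (rule q-sub). -/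
def SubQual (Γ : Ctx) (St : StoreTy) (p q : Qual) : Prop :=
  p ⊆ q ∧ q ⊆ ctxAtoms Γ ∪ styAtoms St

/-- Subtyping on ordinary types (rules s-base, s-ref, s-fun). -/
inductive SubTy : Ctx → StoreTy → Ty → Ty → Prop
  | base {Γ St b} : SubTy Γ St (.base b) (.base b)
  | ref {Γ St b} : SubTy Γ St (.ref b) (.ref b)
  | fn {Γ St x o p q r ε₁ ε₂} {S U T V : Ty} :
      SubTy Γ St U S → SubQual Γ St p o →
      SubTy ((x, U, p) :: Γ) St T V →
      SubQual ((x, U, p) :: Γ) St q r →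
      SubQual ((x, U, p) :: Γ) St ε₁ ε₂ →
      SubTy Γ St (.fn x o S ε₁ q T) (.fn x p U ε₂ r V)

/-- Subtyping on qualified types with effects (rule sqe-sub). -/
def SubQTy (Γ : Ctx) (St : StoreTy) (S : Ty) (p ε₁ : Qual) (T : Ty) (q ε₂ : Qual) : Prop :=
  SubTy Γ St S T ∧ SubQual Γ St p q ∧ SubQual Γ St ε₁ ε₂

/-- Terms of the direct-style λ*ε-calculus. `cst b c` is the constant `c` of base type `b`;
`ref t₁ t₂` is `ref_{t₁} t₂`. -/
inductive Tm : Type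
  | cst : ℕ → ℕ → Tm
  | fvar : ℕ → Tm
  | loc : ℕ → Tm
  | abs : ℕ → Tm → Tm
  | app : Tm → Tm → Tm
  | ref : Tm → Tm → Tm
  | deref : Tm → Tm
  | assign : Tm → Tm → Tm
  | lett : ℕ → Tm → Tm → Tm

/-- The base type `Alloc` of allocation capabilities. -/
def allocB : ℕ := 0
/-- The base type `Unit`. -/
def unitB : ℕ := 1

/-- Term typing `Γ^φ | Σ ⊢ t : T^q ε` of the direct-style λ*ε-calculus. -/
inductive HasTy : Qual → Ctx → StoreTy → Tm → Ty → Qual → Qual → Prop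
  | cst {φ Γ St b c} : HasTy φ Γ St (.cst b c) (.base b) ∅ ∅
  | var {φ Γ St x T q} :
      lookupL Γ x = some (T, q) → Atom.var x ∈ φ →
      HasTy φ Γ St (.fvar x) T {Atom.var x} ∅
  | loc {φ Γ St l T q} :
      lookupL St l = some (T, q) → Atom.loc l ∈ φ →
      HasTy φ Γ St (.loc l) T {Atom.loc l} ∅
  | abs {φ Γ St x t T U p q r ε} :
      HasTy (insert (Atom.var x) q) ((x, T, p) :: Γ) St t U r ε →
      q ⊆ φ →
      HasTy φ Γ St (.abs x t) (.fn x p T ε r U) q ∅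
  | app {φ Γ St t₁ t₂ x T U p q r ps qs ε₁ ε₂ ε₃} :
      HasTy φ Γ St t₁ (.fn x (ps ∩ qs) T ε₃ r U) q ε₁ →
      HasTy φ Γ St t₂ T p ε₂ →
      Sat Γ St p ps → Sat Γ St q qs →
      x ∉ U.fv → ε₃ ⊆ insert (Atom.var x) q → r ⊆ insert (Atom.var x) φ →
      HasTy φ Γ St (.app t₁ t₂) U (qsubst r p x) (qsubst (ε₁ ∪ ε₂ ∪ ε₃) p x)
  | lett {φ Γ St x t₁ t₂ S T p q ps φs ε₁ ε₂} :
      HasTy φ Γ St t₁ S p ε₁ →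
      Sat Γ St p ps → Sat Γ St φ φs →
      HasTy (insert (Atom.var x) φ) ((x, S, ps ∩ φs) :: Γ) St t₂ T q ε₂ →
      x ∉ T.fv →
      HasTy φ Γ St (.lett x t₁ t₂) T (qsubst q p x) (qsubst (ε₁ ∪ ε₂) p x)
  | ref {φ Γ St t₁ t₂ b q ε₁ ε₂} :
      HasTy φ Γ St t₁ (.base allocB) q ε₁ →
      HasTy φ Γ St t₂ (.base b) ∅ ε₂ →
      HasTy φ Γ St (.ref t₁ t₂) (.ref b) ∅ (ε₁ ∪ ε₂ ∪ q)
  | deref {φ Γ St t b q ε} :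
      HasTy φ Γ St t (.ref b) q ε →
      HasTy φ Γ St (.deref t) (.base b) ∅ (ε ∪ q)
  | assign {φ Γ St t₁ t₂ b q ε₁ ε₂} :
      HasTy φ Γ St t₁ (.ref b) q ε₁ →
      HasTy φ Γ St t₂ (.base b) ∅ ε₂ →
      HasTy φ Γ St (.assign t₁ t₂) (.base unitB) ∅ (ε₁ ∪ ε₂ ∪ q)
  | sub {φ Γ St t S T p q ε₁ ε₂} :
      HasTy φ Γ St t S p ε₁ → SubQTy Γ St S p ε₁ T q ε₂ →
      q ⊆ φ → ε₂ ⊆ φ →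
      HasTy φ Γ St t T q ε₂

/-- Term substitution `t[v/x]` (binders with the same name shadow `x`). -/
def Tm.subst : Tm → Tm → ℕ → Tm
  | .cst b c, _, _ => .cst b c
  | .fvar y, v, x => if y = x then v else .fvar y
  | .loc l, _, _ => .loc l
  | .abs y t, v, x => if y = x then .abs y t else .abs y (t.subst v x)
  | .app a b, v, x => .app (a.subst v x) (b.subst v x)
  | .ref a b, v, x => .ref (a.subst v x) (b.subst v x)
  | .deref a, v, x => .deref (a.subst v x)
  | .assign a b, v, x => .assign (a.subst v x) (b.subst v x)
  | .lett y a b, v, x => .lett y (a.subst v x) (if y = x then b else b.subst v x)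

/-- Values of the direct-style λ*ε-calculus. -/
inductive IsValue : Tm → Prop
  | cst {b c} : IsValue (.cst b c)
  | abs {x t} : IsValue (.abs x t)
  | loc {l} : IsValue (.loc l)

/-- Runtime stores: sequences of bindings `let_s ℓ = ref_ω v`. -/
abbrev Store := List (ℕ × Tm)

/-- Functional update of a store at a location. -/
def updateStore : Store → ℕ → Tm → Store
  | [], _, _ => []
  | (l, v) :: σ, l', v' => if l = l' then (l, v') :: σ else (l, v) :: updateStore σ l' v'

/-- Evaluation contexts `E ::= □ | E t | v E | ref_E t | ref_v E | !E | E := t | v := E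
| let x = E in t`. -/
inductive ECtx : Type
  | hole : ECtx
  | appL : ECtx → Tm → ECtx
  | appR : Tm → ECtx → ECtx
  | refL : ECtx → Tm → ECtx
  | refR : Tm → ECtx → ECtx
  | deref : ECtx → ECtx
  | assignL : ECtx → Tm → ECtx
  | assignR : Tm → ECtx → ECtx
  | lett : ℕ → ECtx → Tm → ECtx

def ECtx.plug : ECtx → Tm → Tm
  | .hole, t => t
  | .appL E t₂, t => .app (E.plug t) t₂
  | .appR v E, t => .app v (E.plug t)
  | .refL E t₂, t => .ref (E.plug t) t₂
  | .refR v E, t => .ref v (E.plug t)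
  | .deref E, t => .deref (E.plug t)
  | .assignL E t₂, t => .assign (E.plug t) t₂
  | .assignR v E, t => .assign v (E.plug t)
  | .lett x E t₂, t => .lett x (E.plug t) t₂

/-- Well-formed evaluation contexts: positions to the left of the hole hold values. -/
inductive ECtxWf : ECtx → Prop
  | hole : ECtxWf .hole
  | appL {E t} : ECtxWf E → ECtxWf (.appL E t)
  | appR {v E} : IsValue v → ECtxWf E → ECtxWf (.appR v E)
  | refL {E t} : ECtxWf E → ECtxWf (.refL E t)
  | refR {v E} : IsValue v → ECtxWf E → ECtxWf (.refR v E)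
  | deref {E} : ECtxWf E → ECtxWf (.deref E)
  | assignL {E t} : ECtxWf E → ECtxWf (.assignL E t)
  | assignR {v E} : IsValue v → ECtxWf E → ECtxWf (.assignR v E)
  | lett {x E t} : ECtxWf E → ECtxWf (.lett x E t)

/-- Head reduction rules β, let, ref, deref, assign. -/
inductive HeadStep : Store → Tm → Store → Tm → Prop
  | beta {σ x t v} : IsValue v →
      HeadStep σ (.app (.abs x t) v) σ (t.subst v x)
  | lett {σ x v t} : IsValue v →
      HeadStep σ (.lett x v t) σ (t.subst v x)
  | ref {σ c v l} : IsValue v → lookupL σ l = none →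
      HeadStep σ (.ref (.cst allocB c) v) ((l, v) :: σ) (.loc l)
  | deref {σ l v} : lookupL σ l = some v →
      HeadStep σ (.deref (.loc l)) σ v
  | assign {σ l v v'} : IsValue v' → lookupL σ l = some v →
      HeadStep σ (.assign (.loc l) v') (updateStore σ l v') (.cst unitB 0)

/-- Standard call-by-value reduction `σ | t →ᵥ σ' | t'`. -/
inductive Step : Store → Tm → Store → Tm → Prop
  | ctx {E σ σ' t t'} : ECtxWf E → HeadStep σ t σ' t' →
      Step σ (E.plug t) σ' (E.plug t')

/-- Well-formed stores `Γ^φ | Σ ⊢ σ`: the store has the same locations as `Σ` and each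
stored value is well typed at the base type recorded in `Σ`. -/
inductive StoreOk : Qual → Ctx → StoreTy → Store → Prop
  | nil {φ Γ} : StoreOk φ Γ [] []
  | cons {φ Γ St σ v b l} :
      StoreOk φ Γ St σ →
      HasTy φ Γ St v (.base b) ∅ ∅ →
      lookupL St l = none →
      StoreOk φ Γ ((l, .ref b, (∅ : Qual)) :: St) ((l, v) :: σ)

lemma lookupL_eq_none_of_notMem {α : Type} {L : List (ℕ × α)} {x : ℕ}
    (h : x ∉ L.map Prod.fst) : lookupL L x = none := by
  induction L with
  | nil => rfl
  | cons b L ih =>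
    obtain ⟨y, e⟩ := b
    simp only [List.map_cons, List.mem_cons, not_or] at h
    simp only [lookupL, if_neg h.1, ih h.2]

lemma exists_lookupL_eq_none {α : Type} (L : List (ℕ × α)) : ∃ x, lookupL L x = none :=
  let ⟨x, hx⟩ := Infinite.exists_notMem_finset (L.map Prod.fst).toFinset
  ⟨x, lookupL_eq_none_of_notMem (by simpa using hx)⟩

lemma StoreOk.exists_lookup {φ Γ St σ} (hσ : StoreOk φ Γ St σ) {l T p}
    (hl : lookupL St l = some (T, p)) : ∃ b, T = .ref b ∧ ∃ v, lookupL σ l = some v := by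
  induction hσ with
  | nil => cases hl
  | @cons _ _ v b l' _ _ _ ih =>
    by_cases he : l = l'
    · subst he
      simp only [lookupL, if_true, Option.some.injEq, Prod.mk.injEq] at hl ⊢
      exact ⟨b, hl.1.symm, v, rfl⟩
    · simp only [lookupL, if_neg he] at hl ⊢
      exact ih hl

inductive Canonical (σ : Store) : Tm → Ty → Prop
  | cst {b c} : Canonical σ (.cst b c) (.base b)
  | abs {x t y p T ε r U} : Canonical σ (.abs x t) (.fn y p T ε r U)
  | loc {l b w} : lookupL σ l = some w → Canonical σ (.loc l) (.ref b)

lemma Canonical.of_subTy {σ v S T Γ St} (hv : Canonical σ v S) (hST : SubTy Γ St S T) :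
    Canonical σ v T := by
  cases hv <;> cases hST
  case cst => exact .cst
  case abs => exact .abs
  case loc hw => exact .loc hw

lemma HasTy.canonical {φ Γ St v T q ε φ' Γ' σ} (h : HasTy φ Γ St v T q ε) (hv : IsValue v)
    (hσ : StoreOk φ' Γ' St σ) : Canonical σ v T := by
  induction h with
  | cst => exact .cst
  | abs => exact .abs
  | loc hl =>
    obtain ⟨b, rfl, w, hw⟩ := hσ.exists_lookup hl
    exact .loc hw
  | sub _ hST _ _ ih => exact (ih hv hσ).of_subTy hST.1
  | var | app | lett | ref | deref | assign => cases hv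

lemma HeadStep.step {σ σ' t t'} (h : HeadStep σ t σ' t') : Step σ t σ' t' :=
  .ctx .hole h

namespace Step

variable {σ σ' : Store} {t t' : Tm}

lemma appL (h : Step σ t σ' t') (t₂ : Tm) : Step σ (.app t t₂) σ' (.app t' t₂) := by
  obtain ⟨hE, hd⟩ := h
  exact .ctx (.appL hE) hd

lemma appR {v : Tm} (hv : IsValue v) (h : Step σ t σ' t') : Step σ (.app v t) σ' (.app v t') := by
  obtain ⟨hE, hd⟩ := h
  exact .ctx (.appR hv hE) hd

lemma refL (h : Step σ t σ' t') (t₂ : Tm) : Step σ (.ref t t₂) σ' (.ref t' t₂) := by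
  obtain ⟨hE, hd⟩ := h
  exact .ctx (.refL hE) hd

lemma refR {v : Tm} (hv : IsValue v) (h : Step σ t σ' t') : Step σ (.ref v t) σ' (.ref v t') := by
  obtain ⟨hE, hd⟩ := h
  exact .ctx (.refR hv hE) hd

lemma deref (h : Step σ t σ' t') : Step σ (.deref t) σ' (.deref t') := by
  obtain ⟨hE, hd⟩ := h
  exact .ctx (.deref hE) hd

lemma assignL (h : Step σ t σ' t') (t₂ : Tm) : Step σ (.assign t t₂) σ' (.assign t' t₂) := by
  obtain ⟨hE, hd⟩ := h
  exact .ctx (.assignL hE) hd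

lemma assignR {v : Tm} (hv : IsValue v) (h : Step σ t σ' t') :
    Step σ (.assign v t) σ' (.assign v t') := by
  obtain ⟨hE, hd⟩ := h
  exact .ctx (.assignR hv hE) hd

lemma lett (x : ℕ) (h : Step σ t σ' t') (t₂ : Tm) : Step σ (.lett x t t₂) σ' (.lett x t' t₂) := by
  obtain ⟨hE, hd⟩ := h
  exact .ctx (.lett hE) hd

end Step

lemma HasTy.isValue_or_step {φ St t T q ε φ' Γ' σ} (h : HasTy φ [] St t T q ε)
    (hσ : StoreOk φ' Γ' St σ) : IsValue t ∨ ∃ σ' t', Step σ t σ' t' := by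
  generalize hΓ : ([] : Ctx) = Γ at h
  induction h with
  | cst => exact .inl .cst
  | abs => exact .inl .abs
  | loc => exact .inl .loc
  | var hl => subst hΓ; cases hl
  | sub _ _ _ _ ih => exact ih hσ hΓ
  | app h₁ _ _ _ _ _ _ ih₁ ih₂ =>
    refine .inr ?_
    obtain v₁ | ⟨σ', t', st⟩ := ih₁ hσ hΓ
    · obtain v₂ | ⟨σ', t', st⟩ := ih₂ hσ hΓ
      · cases h₁.canonical v₁ hσ
        exact ⟨_, _, (HeadStep.beta v₂).step⟩
      · exact ⟨_, _, st.appR v₁⟩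
    · exact ⟨_, _, st.appL _⟩
  | lett _ _ _ _ _ ih₁ =>
    refine .inr ?_
    obtain v₁ | ⟨σ', t', st⟩ := ih₁ hσ hΓ
    · exact ⟨_, _, (HeadStep.lett v₁).step⟩
    · exact ⟨_, _, st.lett _ _⟩
  | ref h₁ _ ih₁ ih₂ =>
    refine .inr ?_
    obtain v₁ | ⟨σ', t', st⟩ := ih₁ hσ hΓ
    · obtain v₂ | ⟨σ', t', st⟩ := ih₂ hσ hΓ
      · cases h₁.canonical v₁ hσ
        obtain ⟨l, hl⟩ := exists_lookupL_eq_none σ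
        exact ⟨_, _, (HeadStep.ref v₂ hl).step⟩
      · exact ⟨_, _, st.refR v₁⟩
    · exact ⟨_, _, st.refL _⟩
  | deref h₁ ih₁ =>
    refine .inr ?_
    obtain v₁ | ⟨σ', t', st⟩ := ih₁ hσ hΓ
    · cases h₁.canonical v₁ hσ with
      | loc hw => exact ⟨_, _, (HeadStep.deref hw).step⟩
    · exact ⟨_, _, st.deref⟩
  | assign h₁ _ ih₁ ih₂ =>
    refine .inr ?_
    obtain v₁ | ⟨σ', t', st⟩ := ih₁ hσ hΓ
    · obtain v₂ | ⟨σ', t', st⟩ := ih₂ hσ hΓ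
      · cases h₁.canonical v₁ hσ with
        | loc hw => exact ⟨_, _, (HeadStep.assign v₂ hw).step⟩
      · exact ⟨_, _, st.assignR v₁⟩
    · exact ⟨_, _, st.assignL _⟩

/-- **Progress** for the direct-style λ*ε-calculus: if `∅^{dom(Σ)} | Σ ⊢ t : T^q ε`, then
either `t` is a value, or for every store `σ` with `∅^{dom(Σ)} | Σ ⊢ σ` there exist `t'`
and `σ'` with `σ | t →ᵥ σ' | t'`. -/
theorem progress
    (St : StoreTy) (t : Tm) (T : Ty) (q ε : Qual)
    (h : HasTy (styAtoms St) [] St t T q ε) :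
    IsValue t ∨
      ∀ σ, StoreOk (styAtoms St) [] St σ → ∃ σ' t', Step σ t σ' t' := by
  by_cases hv : IsValue t
  · exact .inl hv
  · exact .inr fun σ hσ => (h.isValue_or_step hσ).resolve_left hv
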